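/- The optimal solution of min over y_1, y_2 ∈ R^n of ‖y_1 - d_1‖² + 2‖y_1 - x_1‖² + ‖y_2 - d_2‖² + 2‖y_2 - x_2‖² subject to 1^T y_1 = m_1, 1^T y_2 = m_2, y_1 + y_2 = 1_n, y_1, y_2 ≥ 0 (with m_1 + m_2 = n) is given by y_1 = P_{Δ̄(m_1)}( (1/6)(d_1 - d_2) + (1/3)(x_1 - x_2) + (1/2)1_n ) and y_2 = 1_n - y_1, where P_{Δ̄(m_1)} is the Euclidean projection onto the capped simplex Δ̄(m_1) = { y ∈ R^n : 1^T y = m_1, 0 ≤ y ≤ 1 }. -/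
import Mathlib


/-- Objective of the diagonal projection subproblem. -/
def obj13 {n : ℕ} (d1 d2 x1 x2 y1 y2 : Fin n → ℝ) : ℝ :=
  ∑ i, (y1 i - d1 i) ^ 2 + 2 * ∑ i, (y1 i - x1 i) ^ 2
    + ∑ i, (y2 i - d2 i) ^ 2 + 2 * ∑ i, (y2 i - x2 i) ^ 2

/-- Feasibility of the diagonal projection subproblem. -/
def feas13 {n : ℕ} (m1 m2 : ℝ) (y1 y2 : Fin n → ℝ) : Prop :=
  (∑ i, y1 i = m1) ∧ (∑ i, y2 i = m2) ∧ (∀ i, y1 i + y2 i = 1) ∧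
    (∀ i, 0 ≤ y1 i) ∧ (∀ i, 0 ≤ y2 i)

lemma obj13_eq {n : ℕ} (d1 d2 x1 x2 u : Fin n → ℝ) :
    obj13 d1 d2 x1 x2 u (fun i => 1 - u i)
      = 6 * ∑ i, (u i - ((1 / 6) * (d1 i - d2 i) + (1 / 3) * (x1 i - x2 i) + 1 / 2)) ^ 2
        + ∑ i, ((d1 i) ^ 2 + 2 * (x1 i) ^ 2 + (1 - d2 i) ^ 2 + 2 * (1 - x2 i) ^ 2
            - 6 * ((1 / 6) * (d1 i - d2 i) + (1 / 3) * (x1 i - x2 i) + 1 / 2) ^ 2) := by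
  simp only [obj13, Finset.mul_sum, ← Finset.sum_add_distrib]
  apply Finset.sum_congr rfl
  intro i _
  ring

/-- The optimal solution of the diagonal projection subproblem is obtained by
projecting (1/6)(d1 - d2) + (1/3)(x1 - x2) + (1/2)1 onto the capped simplex
Δ̄(m1) and setting y2 = 1 - y1. -/
theorem diag_subproblem_solution (n : ℕ) (d1 d2 x1 x2 : Fin n → ℝ)
    (m1 m2 : ℝ) (hm1 : 0 < m1) (hm2 : 0 < m2) (hmn : m1 + m2 = n)
    (z : Fin n → ℝ)
    (hzfeas : (∑ i, z i = m1) ∧ ∀ i, 0 ≤ z i ∧ z i ≤ 1)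
    (hzproj : ∀ w : Fin n → ℝ, (∑ i, w i = m1) → (∀ i, 0 ≤ w i ∧ w i ≤ 1) →
      ∑ i, (z i - ((1 / 6) * (d1 i - d2 i) + (1 / 3) * (x1 i - x2 i) + 1 / 2)) ^ 2 ≤
        ∑ i, (w i - ((1 / 6) * (d1 i - d2 i) + (1 / 3) * (x1 i - x2 i) + 1 / 2)) ^ 2) :
    feas13 m1 m2 z (fun i => 1 - z i) ∧
      ∀ y1 y2 : Fin n → ℝ, feas13 m1 m2 y1 y2 →
        obj13 d1 d2 x1 x2 z (fun i => 1 - z i) ≤ obj13 d1 d2 x1 x2 y1 y2 := by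
  obtain ⟨hzsum, hzbd⟩ := hzfeas
  constructor
  · refine ⟨hzsum, ?_, fun i => by ring, fun i => (hzbd i).1, fun i => by
      have := (hzbd i).2; dsimp only; linarith⟩
    have : ∑ i, (1 - z i) = (n : ℝ) - m1 := by
      simp [Finset.sum_sub_distrib, hzsum]
    linarith
  · intro y1 y2 hy
    obtain ⟨hy1, hy2, hyad, hy1p, hy2p⟩ := hy
    have hy2eq : y2 = fun i => 1 - y1 i := by
      funext i; have := hyad i; linarith
    rw [hy2eq, obj13_eq, obj13_eq]
    have h := hzproj y1 hy1 (fun i => ⟨hy1p i, by have := hy2p i; have := hyad i; linarith⟩)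
    linarith
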